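/- arXiv:1505.00993 — 2 statements merged into one kernel-verified Lean document; each statement's English description precedes it below -/
import Mathlib

section
/- Let B be an order-m dimension-n real tensor (m ≥ 2) with all entries nonnegative, let s > 0 and b ∈ ℝ^n with b ≥ 0, and set A = s I − B. Suppose there exists z ∈ ℝ^n with z > 0 (all components strictly positive) and A z^{m-1} > 0. Define α = min_i b_i/(A z^{m-1})_i and β = max_i b_i/(A z^{m-1})_i. Then there exists x ∈ ℝ^n with α^{1/(m-1)} z ≤ x ≤ β^{1/(m-1)} z (in particular x ≥ 0) satisfying A x^{m-1} = b. -/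
/-!
Writing `A = s I - B`, the equation `A x^{m-1} = b` says that `x` is a fixed point of
`g(x)_i = ((b_i + (B x^{m-1})_i) / s)^{1/(m-1)}`, which is monotone on the nonnegative orthant
because `B ≥ 0`. By homogeneity, `A (c z)^{m-1} = c^{m-1} A z^{m-1}`, so the choice of `α` and `β`
makes `α^{1/(m-1)} z` a sub-solution and `β^{1/(m-1)} z` a super-solution, i.e. `g` maps the order
interval between them into itself. Tarski's fixed point theorem on that interval, a complete
lattice, gives the solution.
-/

/-- `(A x^{m-1})_i = ∑_{i₂,…,i_m} a_{i i₂ … i_m} x_{i₂} ⋯ x_{i_m}`. -/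
def tApply {n k : ℕ} (A : Fin n → (Fin k → Fin n) → ℝ) (x : Fin n → ℝ) : Fin n → ℝ :=
  fun i => ∑ j : Fin k → Fin n, A i j * ∏ t, x (j t)

/-- The identity tensor: entries `1` when all indices are equal, `0` otherwise. -/
def idT {n k : ℕ} : Fin n → (Fin k → Fin n) → ℝ :=
  fun i j => if ∀ t, j t = i then 1 else 0

open Set

theorem exists_fixedPoint_mem_Icc {α : Type*} [ConditionallyCompleteLattice α] {f : α → α}
    {a b : α} (hab : a ≤ b) (hf : MonotoneOn f (Icc a b)) (ha : a ≤ f a) (hb : f b ≤ b) :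
    ∃ x ∈ Icc a b, f x = x := by
  have : Fact (a ≤ b) := ⟨hab⟩
  have hmaps : MapsTo f (Icc a b) (Icc a b) := fun x hx =>
    ⟨ha.trans (hf (left_mem_Icc.2 hab) hx hx.1), (hf hx (right_mem_Icc.2 hab) hx.2).trans hb⟩
  let F : Icc a b →o Icc a b := ⟨hmaps.restrict f _ _, fun x y hxy => hf x.2 y.2 hxy⟩
  exact ⟨F.lfp, F.lfp.2, congrArg Subtype.val F.map_lfp⟩

namespace Real

variable {k : ℕ} {x y : ℝ}

theorem le_rpow_inv_natCast_iff (hx : 0 ≤ x) (hy : 0 ≤ y) (hk : k ≠ 0) :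
    x ≤ y ^ (k⁻¹ : ℝ) ↔ x ^ k ≤ y := by
  rw [← pow_le_pow_iff_left₀ hx (rpow_nonneg hy _) hk, rpow_inv_natCast_pow hy hk]

theorem rpow_inv_natCast_le_iff (hx : 0 ≤ x) (hy : 0 ≤ y) (hk : k ≠ 0) :
    y ^ (k⁻¹ : ℝ) ≤ x ↔ y ≤ x ^ k := by
  rw [← pow_le_pow_iff_left₀ (rpow_nonneg hy _) hx hk, rpow_inv_natCast_pow hy hk]

theorem rpow_inv_natCast_eq_iff (hx : 0 ≤ x) (hy : 0 ≤ y) (hk : k ≠ 0) :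
    y ^ (k⁻¹ : ℝ) = x ↔ y = x ^ k := by
  rw [← pow_left_inj₀ (rpow_nonneg hy _) hx hk, rpow_inv_natCast_pow hy hk]

end Real

section Tensor

variable {n k : ℕ} {A B : Fin n → (Fin k → Fin n) → ℝ} {s : ℝ} {b : Fin n → ℝ}

theorem tApply_idT (x : Fin n → ℝ) (i : Fin n) : tApply (idT (k := k)) x i = x i ^ k := by
  unfold tApply idT
  rw [Finset.sum_eq_single (fun _ => i)]
  · simp
  · intro j _ hj
    simp [show ¬ ∀ t, j t = i from fun h => hj (funext h)]
  · simp

theorem tApply_eq_mul_pow_sub (hA : ∀ i j, A i j = s * idT i j - B i j) (x : Fin n → ℝ)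
    (i : Fin n) : tApply A x i = s * x i ^ k - tApply B x i := by
  rw [← tApply_idT, tApply, tApply, tApply, Finset.mul_sum, ← Finset.sum_sub_distrib]
  exact Finset.sum_congr rfl fun j _ => by rw [hA]; ring

theorem tApply_smul (A : Fin n → (Fin k → Fin n) → ℝ) (c : ℝ) (x : Fin n → ℝ) (i : Fin n) :
    tApply A (c • x) i = c ^ k * tApply A x i := by
  rw [tApply, tApply, Finset.mul_sum]
  refine Finset.sum_congr rfl fun j _ => ?_
  simp only [Pi.smul_apply, smul_eq_mul, Finset.prod_mul_distrib, Finset.prod_const,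
    Finset.card_univ, Fintype.card_fin]
  ring

theorem tApply_rpow_inv_smul (A : Fin n → (Fin k → Fin n) → ℝ) {c : ℝ} (hc : 0 ≤ c)
    (hk : k ≠ 0) (x : Fin n → ℝ) (i : Fin n) :
    tApply A (c ^ (k⁻¹ : ℝ) • x) i = c * tApply A x i := by
  rw [tApply_smul, Real.rpow_inv_natCast_pow hc hk]

theorem tApply_nonneg (hB : ∀ i j, 0 ≤ B i j) {x : Fin n → ℝ} (hx : 0 ≤ x) (i : Fin n) :
    0 ≤ tApply B x i :=
  Finset.sum_nonneg fun j _ => mul_nonneg (hB i j) (Finset.prod_nonneg fun t _ => hx (j t))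

theorem tApply_mono (hB : ∀ i j, 0 ≤ B i j) {x y : Fin n → ℝ} (hx : 0 ≤ x) (hxy : x ≤ y)
    (i : Fin n) : tApply B x i ≤ tApply B y i :=
  Finset.sum_le_sum fun j _ => mul_le_mul_of_nonneg_left
    (Finset.prod_le_prod (fun t _ => hx (j t)) (fun t _ => hxy (j t))) (hB i j)

noncomputable def fixedPointMap (B : Fin n → (Fin k → Fin n) → ℝ) (s : ℝ) (b : Fin n → ℝ)
    (x : Fin n → ℝ) : Fin n → ℝ :=
  fun i => ((b i + tApply B x i) / s) ^ (k⁻¹ : ℝ)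

variable (hB : ∀ i j, 0 ≤ B i j) (hs : 0 < s) (hb : 0 ≤ b)
include hB hs hb

theorem fixedPointMap_base_nonneg {x : Fin n → ℝ} (hx : 0 ≤ x) (i : Fin n) :
    0 ≤ (b i + tApply B x i) / s :=
  div_nonneg (add_nonneg (hb i) (tApply_nonneg hB hx i)) hs.le

theorem monotoneOn_fixedPointMap : MonotoneOn (fixedPointMap B s b) {x | 0 ≤ x} :=
  fun x hx _ _ hxy i => Real.rpow_le_rpow (fixedPointMap_base_nonneg hB hs hb hx i)
    (by gcongr; exact tApply_mono hB hx hxy i) (by positivity)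

variable (hA : ∀ i j, A i j = s * idT i j - B i j) (hk : k ≠ 0)
include hA hk

theorem le_fixedPointMap_iff {x : Fin n → ℝ} (hx : 0 ≤ x) :
    x ≤ fixedPointMap B s b x ↔ ∀ i, tApply A x i ≤ b i := by
  refine forall_congr' fun i => ?_
  rw [fixedPointMap, Real.le_rpow_inv_natCast_iff (hx i) (fixedPointMap_base_nonneg hB hs hb hx i)
    hk, le_div_iff₀ hs, tApply_eq_mul_pow_sub hA]
  constructor <;> intro h <;> linarith

theorem fixedPointMap_le_iff {x : Fin n → ℝ} (hx : 0 ≤ x) :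
    fixedPointMap B s b x ≤ x ↔ ∀ i, b i ≤ tApply A x i := by
  refine forall_congr' fun i => ?_
  rw [fixedPointMap, Real.rpow_inv_natCast_le_iff (hx i) (fixedPointMap_base_nonneg hB hs hb hx i)
    hk, div_le_iff₀ hs, tApply_eq_mul_pow_sub hA]
  constructor <;> intro h <;> linarith

theorem fixedPointMap_eq_self_iff {x : Fin n → ℝ} (hx : 0 ≤ x) :
    fixedPointMap B s b x = x ↔ ∀ i, tApply A x i = b i := by
  rw [funext_iff]
  refine forall_congr' fun i => ?_
  rw [fixedPointMap, Real.rpow_inv_natCast_eq_iff (hx i) (fixedPointMap_base_nonneg hB hs hb hx i)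
    hk, div_eq_iff hs.ne', tApply_eq_mul_pow_sub hA]
  constructor <;> intro h <;> linarith

end Tensor

theorem stmt8 {n m : ℕ} (hm : 2 ≤ m) (B : Fin n → (Fin (m - 1) → Fin n) → ℝ)
    (hB : ∀ i j, 0 ≤ B i j) (s : ℝ) (hs : 0 < s) (b : Fin n → ℝ) (hb : ∀ i, 0 ≤ b i)
    (A : Fin n → (Fin (m - 1) → Fin n) → ℝ)
    (hA : ∀ i j, A i j = s * idT i j - B i j)
    (z : Fin n → ℝ) (hz : ∀ i, 0 < z i) (hAz : ∀ i, 0 < tApply A z i)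
    (α β : ℝ)
    (hα : IsLeast {r : ℝ | ∃ i, r = b i / tApply A z i} α)
    (hβ : IsGreatest {r : ℝ | ∃ i, r = b i / tApply A z i} β) :
    ∃ x : Fin n → ℝ,
      (∀ i, α ^ ((1 : ℝ) / ((m : ℝ) - 1)) * z i ≤ x i) ∧
      (∀ i, x i ≤ β ^ ((1 : ℝ) / ((m : ℝ) - 1)) * z i) ∧
      ∀ i, tApply A x i = b i := by
  have hk : m - 1 ≠ 0 := by omega
  rw [one_div, ← Nat.cast_one, ← Nat.cast_sub (by omega)]
  have hαβ : α ≤ β := hα.2 hβ.1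
  have hα0 : 0 ≤ α := by obtain ⟨j, rfl⟩ := hα.1; exact div_nonneg (hb j) (hAz j).le
  have hβ0 : 0 ≤ β := hα0.trans hαβ
  have hz0 : 0 ≤ z := fun i => (hz i).le
  set u := α ^ ((m - 1 : ℕ)⁻¹ : ℝ) • z
  set v := β ^ ((m - 1 : ℕ)⁻¹ : ℝ) • z
  have hu0 : 0 ≤ u := smul_nonneg (Real.rpow_nonneg hα0 _) hz0
  have hv0 : 0 ≤ v := smul_nonneg (Real.rpow_nonneg hβ0 _) hz0
  have huv : u ≤ v := smul_le_smul_of_nonneg_right (Real.rpow_le_rpow hα0 hαβ (by positivity)) hz0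
  have hu : u ≤ fixedPointMap B s b u := (le_fixedPointMap_iff hB hs hb hA hk hu0).2 fun i => by
    rw [tApply_rpow_inv_smul A hα0 hk]
    exact (le_div_iff₀ (hAz i)).1 (hα.2 ⟨i, rfl⟩)
  have hv : fixedPointMap B s b v ≤ v := (fixedPointMap_le_iff hB hs hb hA hk hv0).2 fun i => by
    rw [tApply_rpow_inv_smul A hβ0 hk]
    exact (div_le_iff₀ (hAz i)).1 (hβ.2 ⟨i, rfl⟩)
  obtain ⟨x, ⟨hux, hxv⟩, hfix⟩ := exists_fixedPoint_mem_Icc huv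
    ((monotoneOn_fixedPointMap hB hs hb).mono fun y hy => hu0.trans hy.1) hu hv
  exact ⟨x, hux, hxv, (fixedPointMap_eq_self_iff hB hs hb hA hk (hu0.trans hux)).1 hfix⟩
end

section
/- Let A be an order-m dimension-n real tensor (m ≥ 2) such that there exists a permutation matrix P ∈ ℝ^{n×n} for which the tensor P A, defined by (P A)_{i1 i2 … im} = Σ_{i=1}^n p_{i1 i} a_{i i2 … im}, is a Z-tensor, and let b ∈ ℝ^n with P b ≥ 0. Suppose the problem (P0) of minimizing ‖x‖₀ subject to x ≥ 0, A x^{m-1} − b ≥ 0, ⟨x, A x^{m-1} − b⟩ = 0 is feasible. Then (P0) has a solution x* which is also the unique optimal solution of the problem of minimizing e^T x subject to x ≥ 0 and A x^{m-1} − b = 0. -/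
/-- `A` is a Z-tensor: all off-diagonal entries (indices not all equal) are nonpositive. -/
def IsZTensor {n k : ℕ} (A : Fin n → (Fin k → Fin n) → ℝ) : Prop :=
  ∀ i j, ¬ (∀ t, j t = i) → A i j ≤ 0

/-- `‖x‖₀`, the number of nonzero components of `x`. -/
noncomputable def l0 {n : ℕ} (x : Fin n → ℝ) : ℕ :=
  (Finset.univ.filter (fun i => x i ≠ 0)).card

/-!
For a Z-tensor `A` and `b ≥ 0`, the feasible set `{x ≥ 0 | A x^{m-1} ≥ b}` is closed under
componentwise minima, because row `i` of `A x^{m-1}` can only grow when the variables other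
than `x i` decrease. Being closed and bounded below, it therefore has a least element `x*`, and
every inequality is tight at `x*`: otherwise `x*_i` could be lowered. A least feasible point
has the smallest support and the smallest sum of all feasible points, which gives both
optimality claims. Permuting the rows by `P` reduces the general case to this one.
-/

open Finset Topology

lemma eq_of_le_of_sum_le {ι M : Type*} [Fintype ι] [AddCommMonoid M] [PartialOrder M]
    [IsOrderedCancelAddMonoid M] {x y : ι → M} (hxy : x ≤ y)
    (hsum : ∑ i, y i ≤ ∑ i, x i) : x = y :=
  eq_of_le_of_not_lt hxy fun hlt => (Fintype.sum_strictMono hlt).not_ge hsum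

lemma l0_mono {n : ℕ} {x y : Fin n → ℝ} (hx : 0 ≤ x) (hxy : x ≤ y) : l0 x ≤ l0 y :=
  card_le_card <| monotone_filter_right _ fun i _ hxi hyi =>
    hxi (le_antisymm (hyi ▸ hxy i) (hx i))

section ZTensor

variable {n k : ℕ}

def superSolutions (A : Fin n → (Fin k → Fin n) → ℝ) (b : Fin n → ℝ) : Set (Fin n → ℝ) :=
  {x | 0 ≤ x ∧ b ≤ tApply A x}

lemma continuous_tApply (A : Fin n → (Fin k → Fin n) → ℝ) : Continuous (tApply A) := by
  unfold tApply
  fun_prop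

lemma isClosed_superSolutions (A : Fin n → (Fin k → Fin n) → ℝ) (b : Fin n → ℝ) :
    IsClosed (superSolutions A b) :=
  isClosed_le continuous_const continuous_id |>.inter <|
    isClosed_le continuous_const (continuous_tApply A)

-- `fun i j => A (σ i) j` is the tensor `P A` and `b ∘ σ` is `P b`.
lemma superSolutions_rowPerm (A : Fin n → (Fin k → Fin n) → ℝ) (b : Fin n → ℝ)
    (σ : Equiv.Perm (Fin n)) :
    superSolutions (fun i j => A (σ i) j) (b ∘ σ) = superSolutions A b := by
  ext x
  simp only [superSolutions, Set.mem_ofPred_eq, Pi.le_def, Function.comp_apply]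
  exact and_congr_right fun _ => σ.forall_congr_right (q := fun i => b i ≤ tApply A x i)

namespace IsZTensor

variable {A : Fin n → (Fin k → Fin n) → ℝ}

lemma tApply_le_tApply (hA : IsZTensor A) {x y : Fin n → ℝ} (hx : 0 ≤ x) (hxy : x ≤ y)
    {i : Fin n} (hi : x i = y i) : tApply A y i ≤ tApply A x i := by
  refine sum_le_sum fun j _ => ?_
  by_cases hdiag : ∀ t, j t = i
  · simp only [hdiag, hi, le_refl]
  · exact mul_le_mul_of_nonpos_left
      (prod_le_prod (fun t _ => hx _) fun t _ => hxy _) (hA i j hdiag)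

lemma tApply_nonpos (hA : IsZTensor A) (hk : k ≠ 0) {x : Fin n → ℝ} (hx : 0 ≤ x) {i : Fin n}
    (hi : x i = 0) : tApply A x i ≤ 0 := by
  refine sum_nonpos fun j _ => ?_
  by_cases hdiag : ∀ t, j t = i
  · have : ∏ t, x (j t) = 0 :=
      prod_eq_zero (mem_univ ⟨0, Nat.pos_of_ne_zero hk⟩) (by rw [hdiag, hi])
    rw [this, mul_zero]
  · exact mul_nonpos_of_nonpos_of_nonneg (hA i j hdiag) (prod_nonneg fun t _ => hx _)

lemma inf_mem_superSolutions (hA : IsZTensor A) {b x y : Fin n → ℝ}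
    (hx : x ∈ superSolutions A b) (hy : y ∈ superSolutions A b) :
    x ⊓ y ∈ superSolutions A b := by
  have hxy : 0 ≤ x ⊓ y := le_inf hx.1 hy.1
  refine ⟨hxy, fun i => ?_⟩
  rcases le_total (x i) (y i) with h | h
  · exact (hx.2 i).trans (hA.tApply_le_tApply hxy inf_le_left (inf_eq_left.2 h))
  · exact (hy.2 i).trans (hA.tApply_le_tApply hxy inf_le_right (inf_eq_right.2 h))

lemma exists_isLeast_superSolutions (hA : IsZTensor A) {b : Fin n → ℝ}
    (hne : (superSolutions A b).Nonempty) : ∃ xs, IsLeast (superSolutions A b) xs := by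
  obtain ⟨x₀, hx₀⟩ := hne
  -- a minimiser of `∑ x i` over the compact part below `x₀` lies below every feasible point,
  -- since its meet with that point is feasible as well
  have hK : IsCompact (superSolutions A b ∩ Set.Icc 0 x₀) :=
    isCompact_Icc.inter_left (isClosed_superSolutions A b)
  obtain ⟨z, ⟨hz, hz0, hzx₀⟩, hmin⟩ := hK.exists_isMinOn ⟨x₀, hx₀, hx₀.1, le_rfl⟩
    (continuous_finsetSum _ fun i _ => continuous_apply i).continuousOn
  refine ⟨z, hz, fun x hx => ?_⟩
  have hzx : z ⊓ x = z := eq_of_le_of_sum_le inf_le_left <|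
    hmin ⟨hA.inf_mem_superSolutions hz hx, le_inf hz0 hx.1, inf_le_left.trans hzx₀⟩
  exact inf_eq_left.1 hzx

lemma tApply_eq_of_isLeast (hA : IsZTensor A) (hk : k ≠ 0) {b xs : Fin n → ℝ} (hb : 0 ≤ b)
    (hxs : IsLeast (superSolutions A b) xs) : tApply A xs = b := by
  funext i
  refine le_antisymm ?_ (hxs.1.2 i)
  rcases hxs.1.1 i |>.eq_or_lt with hi | hi
  · exact (hA.tApply_nonpos hk hxs.1.1 hi.symm).trans (hb i)
  by_contra! hlt
  -- otherwise `xs i` can be lowered a little without leaving the feasible set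
  have hcont : Continuous fun t => tApply A (Function.update xs i t) i :=
    (continuous_apply i).comp <|
      (continuous_tApply A).comp (continuous_const.update i continuous_id)
  have hnear : ∀ᶠ t in 𝓝[<] xs i, b i < tApply A (Function.update xs i t) i :=
    nhdsWithin_le_nhds <| continuousAt_const.eventually_lt hcont.continuousAt
      (by simpa using hlt)
  obtain ⟨t, hbt, ht0, htx⟩ := (hnear.and (Ioo_mem_nhdsLT hi)).exists
  set y := Function.update xs i t
  have hyx : y ≤ xs := fun j => by
    rcases eq_or_ne j i with rfl | hj
    · simpa [y] using htx.le
    · simp [y, hj]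
  have hy0 : 0 ≤ y := fun j => by
    rcases eq_or_ne j i with rfl | hj
    · simpa [y] using ht0.le
    · simpa [y, hj] using hxs.1.1 j
  have hy : y ∈ superSolutions A b := by
    refine ⟨hy0, fun j => ?_⟩
    rcases eq_or_ne j i with rfl | hj
    · exact hbt.le
    · exact (hxs.1.2 j).trans (hA.tApply_le_tApply hy0 hyx (by simp [y, hj]))
  have := hxs.2 hy i
  simp only [y, Function.update_self] at this
  linarith

lemma exists_isLeast_superSolutions_of_rowPerm (hk : k ≠ 0) {b : Fin n → ℝ}
    {σ : Equiv.Perm (Fin n)} (hA : IsZTensor fun i j => A (σ i) j) (hb : 0 ≤ b ∘ σ)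
    (hne : (superSolutions A b).Nonempty) :
    ∃ xs, IsLeast (superSolutions A b) xs ∧ tApply A xs = b := by
  rw [← superSolutions_rowPerm A b σ] at hne ⊢
  obtain ⟨xs, hxs⟩ := hA.exists_isLeast_superSolutions hne
  refine ⟨xs, hxs, σ.surjective.injective_comp_right ?_⟩
  exact hA.tApply_eq_of_isLeast hk hb hxs

end IsZTensor

end ZTensor

/-- Suppose `P` is a permutation matrix (given by the permutation `σ`) such that the
tensor-matrix product `P A`, with entries `(P A)_{i₁ i₂ … i_m} = ∑ᵢ p_{i₁ i} a_{i i₂ … i_m}`,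
is a Z-tensor, and `P b ≥ 0`.  If `(P₀)` is feasible, then it has a solution `xs`
which is also the unique optimal solution of the linear-objective problem `(P₁)`. -/
theorem stmt13 {n m : ℕ} (hm : 2 ≤ m) (A : Fin n → (Fin (m - 1) → Fin n) → ℝ)
    (b : Fin n → ℝ) (P : Matrix (Fin n) (Fin n) ℝ) (σ : Equiv.Perm (Fin n))
    (hP : ∀ i l, P i l = if l = σ i then 1 else 0)
    (hPA : IsZTensor (fun i j => ∑ l, P i l * A l j))
    (hPb : ∀ i, 0 ≤ ∑ l, P i l * b l)
    (hfeas : ∃ x : Fin n → ℝ, (∀ i, 0 ≤ x i) ∧ (∀ i, b i ≤ tApply A x i) ∧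
      ∑ i, x i * (tApply A x i - b i) = 0) :
    ∃ xs : Fin n → ℝ,
      -- xs solves (P₀)
      ((∀ i, 0 ≤ xs i) ∧ (∀ i, b i ≤ tApply A xs i) ∧
        ∑ i, xs i * (tApply A xs i - b i) = 0) ∧
      (∀ x : Fin n → ℝ, ((∀ i, 0 ≤ x i) ∧ (∀ i, b i ≤ tApply A x i) ∧
        ∑ i, x i * (tApply A x i - b i) = 0) → l0 xs ≤ l0 x) ∧
      -- xs is the unique optimal solution of (P₁)
      ((∀ i, 0 ≤ xs i) ∧ ∀ i, tApply A xs i - b i = 0) ∧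
      (∀ y : Fin n → ℝ, ((∀ i, 0 ≤ y i) ∧ ∀ i, tApply A y i - b i = 0) →
        (∑ i, xs i ≤ ∑ i, y i) ∧ (∑ i, y i = ∑ i, xs i → y = xs)) := by
  have hrow : ∀ i (v : Fin n → ℝ), ∑ l, P i l * v l = v (σ i) := fun i v => by simp [hP]
  have hZ : IsZTensor fun i j => A (σ i) j := by simpa only [hrow] using hPA
  have hb : 0 ≤ b ∘ σ := fun i => (hrow i b).subst (hPb i)
  obtain ⟨x₀, hx₀0, hx₀b, -⟩ := hfeas
  obtain ⟨xs, ⟨⟨hxs0, hxsb⟩, hleast⟩, heq⟩ :=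
    hZ.exists_isLeast_superSolutions_of_rowPerm (by omega) hb ⟨x₀, hx₀0, hx₀b⟩
  refine ⟨xs, ⟨hxs0, hxsb, by simp [heq]⟩, fun x hx => l0_mono hxs0 (hleast ⟨hx.1, hx.2.1⟩),
    ⟨hxs0, by simp [heq]⟩, fun y ⟨hy0, hyb⟩ => ?_⟩
  have hxy : xs ≤ y := hleast ⟨hy0, fun i => (sub_eq_zero.1 (hyb i)).ge⟩
  exact ⟨Fintype.sum_mono hxy, fun h => (eq_of_le_of_sum_le hxy h.le).symm⟩
end
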